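/- For any nonnegative functions φ, ψ ∈ L¹(Ω), the Kullback–Leibler divergence controls the L¹ distance: ‖φ − ψ‖²_{L¹(Ω)} ≤ ( (2/3)‖φ‖_{L¹(Ω)} + (4/3)‖ψ‖_{L¹(Ω)} ) · D_KL(φ,ψ). -/

import Mathlib

open MeasureTheory Real

/-- The Kullback–Leibler functional `D_KL(φ,ψ) = ∫ (φ log(φ/ψ) − φ + ψ) dμ`. -/
noncomputable def KLdiv {X : Type*} [MeasurableSpace X] (μ : Measure X) (φ ψ : X → ℝ) : ℝ :=
  ∫ x, (φ x * Real.log (φ x / ψ x) - φ x + ψ x) ∂μ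

/-!
Pointwise, `(a - b)² ≤ (2a/3 + 4b/3) (a log (a/b) - a + b)` for `a, b ≥ 0`: writing `a = t b`, this
is `3 (t - 1)² ≤ (2t + 4) (t log t - t + 1)`, whose two sides agree to second order at `t = 1`; the
difference has derivative `4 ((t + 1) log t - 2 (t - 1))`, which changes sign only at `t = 1`.
Integrating `2λ|φ - ψ| ≤ λ² (2φ/3 + 4ψ/3) + (φ log (φ/ψ) - φ + ψ)` for every `λ` and taking the
discriminant gives the inequality, as in the proof of Cauchy–Schwarz.
-/

open InformationTheory Set

namespace Real

theorem monotoneOn_add_one_mul_log_sub_two_mul_sub_one :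
    MonotoneOn (fun t => (t + 1) * log t - 2 * (t - 1)) (Ioi 0) := by
  refine monotoneOn_of_hasDerivWithinAt_nonneg (convex_Ioi 0)
    (f' := fun t => log t + (t + 1) * t⁻¹ - 2) ?_ (fun t ht => ?_) (fun t ht => ?_)
  · exact ContinuousOn.sub (ContinuousOn.mul (by fun_prop)
      (continuousOn_log.mono fun t ht => ne_of_gt ht)) (by fun_prop)
  · rw [interior_Ioi] at ht
    have := (((hasDerivAt_id' t).add_const 1).mul (hasDerivAt_log (ne_of_gt ht))).sub
      (((hasDerivAt_id' t).sub_const 1).const_mul 2)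
    exact (this.congr_deriv (by ring)).hasDerivWithinAt
  · rw [interior_Ioi] at ht
    have hlog := one_sub_inv_le_log_of_pos ht
    have : (t + 1) * t⁻¹ = 1 + t⁻¹ := by rw [add_mul, mul_inv_cancel₀ (ne_of_gt ht), one_mul]
    linarith

end Real

namespace InformationTheory

theorem three_mul_sub_one_sq_le_mul_klFun {t : ℝ} (ht : 0 ≤ t) :
    3 * (t - 1) ^ 2 ≤ (2 * t + 4) * klFun t := by
  set g : ℝ → ℝ := fun t => (2 * t + 4) * klFun t - 3 * (t - 1) ^ 2
  set h : ℝ → ℝ := fun t => (t + 1) * log t - 2 * (t - 1)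
  have hg_cont : ContinuousOn g (Ici 0) := by fun_prop
  have hg_deriv : ∀ s, 0 < s → HasDerivAt g (4 * h s) s := fun s hs => by
    have := ((((hasDerivAt_id' s).const_mul 2).add_const 4).mul (hasDerivAt_klFun hs.ne')).sub
      ((((hasDerivAt_id' s).sub_const 1).pow 2).const_mul 3)
    exact this.congr_deriv (by simp only [h, klFun_apply]; ring)
  have h_mono := monotoneOn_add_one_mul_log_sub_two_mul_sub_one
  have h_one : h 1 = 0 := by simp [h]
  suffices g 1 ≤ g t by simpa [g, klFun_one] using this
  rcases le_total t 1 with ht1 | ht1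
  · refine antitoneOn_of_hasDerivWithinAt_nonpos (convex_Icc 0 1) (hg_cont.mono Icc_subset_Ici_self)
      (f' := fun s => 4 * h s) (fun s hs => ?_) (fun s hs => ?_) ⟨ht, ht1⟩ ⟨zero_le_one, le_rfl⟩ ht1
    · rw [interior_Icc] at hs ⊢
      exact (hg_deriv s hs.1).hasDerivWithinAt
    · rw [interior_Icc] at hs
      have := h_mono hs.1 (mem_Ioi.2 zero_lt_one) hs.2.le
      linarith
  · refine monotoneOn_of_hasDerivWithinAt_nonneg (convex_Ici 1)
      (hg_cont.mono (Ici_subset_Ici.2 zero_le_one))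
      (f' := fun s => 4 * h s) (fun s hs => ?_) (fun s hs => ?_) self_mem_Ici ht1 ht1
    · rw [interior_Ici] at hs ⊢
      exact (hg_deriv s (zero_lt_one.trans hs)).hasDerivWithinAt
    · rw [interior_Ici] at hs
      have := h_mono (mem_Ioi.2 zero_lt_one) (mem_Ioi.2 (zero_lt_one.trans hs)) hs.le
      linarith

theorem mul_log_div_sub_add_eq_mul_klFun (a : ℝ) {b : ℝ} (hb : b ≠ 0) :
    a * log (a / b) - a + b = b * klFun (a / b) := by
  rw [klFun_apply]
  field_simp
  ring

theorem mul_log_div_sub_add_nonneg {a b : ℝ} (ha : 0 ≤ a) (hb : 0 ≤ b) (hab : b = 0 → a = 0) :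
    0 ≤ a * log (a / b) - a + b := by
  rcases hb.eq_or_lt with rfl | hb
  · simp [hab rfl]
  · rw [mul_log_div_sub_add_eq_mul_klFun a hb.ne']
    exact mul_nonneg hb.le (klFun_nonneg (div_nonneg ha hb.le))

theorem sq_sub_le_mul_mul_log_div_sub_add {a b : ℝ} (ha : 0 ≤ a) (hb : 0 ≤ b)
    (hab : b = 0 → a = 0) :
    (a - b) ^ 2 ≤ (2 / 3 * a + 4 / 3 * b) * (a * log (a / b) - a + b) := by
  rcases hb.eq_or_lt with rfl | hb
  · simp [hab rfl]
  rw [mul_log_div_sub_add_eq_mul_klFun a hb.ne']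
  obtain ⟨t, ht, rfl⟩ : ∃ t, 0 ≤ t ∧ a = t * b := ⟨a / b, div_nonneg ha hb.le, by field_simp⟩
  rw [mul_div_cancel_right₀ t hb.ne']
  calc (t * b - b) ^ 2 = b ^ 2 * (3 * (t - 1) ^ 2) / 3 := by ring
    _ ≤ b ^ 2 * ((2 * t + 4) * klFun t) / 3 := by
      gcongr ?_ / _
      exact mul_le_mul_of_nonneg_left (three_mul_sub_one_sq_le_mul_klFun ht) (sq_nonneg b)
    _ = (2 / 3 * (t * b) + 4 / 3 * b) * (b * klFun t) := by ring

end InformationTheory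

theorem two_mul_mul_le_sq_mul_add {f c k : ℝ} (hc : 0 ≤ c) (hk : 0 ≤ k) (h : f ^ 2 ≤ c * k)
    (l : ℝ) : 2 * l * f ≤ l ^ 2 * c + k := by
  have hsq : (2 * l * f) ^ 2 ≤ (l ^ 2 * c + k) ^ 2 := by
    nlinarith [sq_nonneg (l ^ 2 * c - k), mul_le_mul_of_nonneg_left h (sq_nonneg l)]
  exact (le_abs_self _).trans (abs_le_of_sq_le_sq hsq (by positivity))

namespace MeasureTheory

theorem sq_integral_le_integral_mul_integral_of_sq_le_mul {X : Type*} [MeasurableSpace X]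
    {μ : Measure X} {f c k : X → ℝ} (hf : Integrable f μ) (hc : Integrable c μ)
    (hk : Integrable k μ) (hc0 : ∀ᵐ x ∂μ, 0 ≤ c x) (hk0 : ∀ᵐ x ∂μ, 0 ≤ k x)
    (h : ∀ᵐ x ∂μ, f x ^ 2 ≤ c x * k x) :
    (∫ x, f x ∂μ) ^ 2 ≤ (∫ x, c x ∂μ) * ∫ x, k x ∂μ := by
  have hlin : ∀ l : ℝ, 2 * l * ∫ x, f x ∂μ ≤ l ^ 2 * ∫ x, c x ∂μ + ∫ x, k x ∂μ := fun l => by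
    rw [← integral_const_mul, ← integral_const_mul, ← integral_add (hc.const_mul _) hk]
    refine integral_mono_ae (hf.const_mul _) ((hc.const_mul _).add hk) ?_
    filter_upwards [hc0, hk0, h] with x hcx hkx hx
    exact two_mul_mul_le_sq_mul_add hcx hkx hx l
  have hdisc := discrim_le_zero (a := ∫ x, c x ∂μ) (b := -2 * ∫ x, f x ∂μ)
    (c := ∫ x, k x ∂μ) fun l => by nlinarith [hlin l]
  rw [discrim] at hdisc
  linarith

end MeasureTheory

/-- generalised Pinsker-type inequality
`‖φ−ψ‖²_{L¹} ≤ ((2/3)‖φ‖_{L¹} + (4/3)‖ψ‖_{L¹}) D_KL(φ,ψ)` for nonnegative `φ, ψ ∈ L¹`. -/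
theorem KLdiv_controls_L1_sq
    {X : Type*} [MeasurableSpace X] (μ : Measure X) (φ ψ : X → ℝ)
    (hφ : Integrable φ μ) (hψ : Integrable ψ μ)
    (hφ0 : ∀ᵐ x ∂μ, 0 ≤ φ x) (hψ0 : ∀ᵐ x ∂μ, 0 ≤ ψ x)
    (habs : ∀ᵐ x ∂μ, ψ x = 0 → φ x = 0)
    (hint : Integrable (fun x => φ x * Real.log (φ x / ψ x) - φ x + ψ x) μ) :
    (∫ x, |φ x - ψ x| ∂μ) ^ 2 ≤
      (2 / 3 * ∫ x, |φ x| ∂μ + 4 / 3 * ∫ x, |ψ x| ∂μ) * KLdiv μ φ ψ := by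
  have hweight : 2 / 3 * ∫ x, |φ x| ∂μ + 4 / 3 * ∫ x, |ψ x| ∂μ =
      ∫ x, (2 / 3 * φ x + 4 / 3 * ψ x) ∂μ := by
    rw [integral_add (hφ.const_mul _) (hψ.const_mul _), integral_const_mul, integral_const_mul,
      integral_congr_ae (hφ0.mono fun x hx => abs_of_nonneg hx),
      integral_congr_ae (hψ0.mono fun x hx => abs_of_nonneg hx)]
  rw [hweight]
  refine sq_integral_le_integral_mul_integral_of_sq_le_mul (hφ.sub hψ).abs
    ((hφ.const_mul _).add (hψ.const_mul _)) hint ?_ ?_ ?_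
  · filter_upwards [hφ0, hψ0] with x hφx hψx
    positivity
  · filter_upwards [hφ0, hψ0, habs] with x hφx hψx habsx
    exact mul_log_div_sub_add_nonneg hφx hψx habsx
  · filter_upwards [hφ0, hψ0, habs] with x hφx hψx habsx
    rw [sq_abs]
    exact sq_sub_le_mul_mul_log_div_sub_add hφx hψx habsx
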